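/- arXiv:1204.1604 — 4 statements merged into one kernel-verified Lean document; each statement's English description precedes it below -/
import Mathlib

section
/- Let (X,d) be a metric space, μ a Borel measure on X, x₀ ∈ X, r(x) = d(x₀,x), and B(x₀,t) the open ball of radius t about x₀. Assume μ has subexponential volume growth, i.e. limsup_{R→∞} ln(μ(B(x₀,R)))/R = 0. Then for every α > 0, lim_{Q→∞} e^{-αQ} ∫_{B(x₀,Q)} e^{-α r(x)} dμ(x) = 0. -/
open Real MeasureTheory Filter

/-- Under subexponential volume growth (`limsup_{R→∞} ln(μ(B(x₀,R)))/R = 0`), for every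
`α > 0` one has `e^{-αQ} ∫_{B(x₀,Q)} e^{-α r} dμ → 0` as `Q → ∞`. -/
theorem stmt_5 {X : Type*} [MetricSpace X] [MeasurableSpace X] [BorelSpace X]
    (μ : Measure X) (x₀ : X)
    (hvol : Filter.limsup
        (fun R : ℝ => ENNReal.log (μ (Metric.ball x₀ R)) / (R : EReal)) Filter.atTop = 0) :
    ∀ α > 0,
      Tendsto
        (fun Q : ℝ =>
          Real.exp (-α * Q) * ∫ x in Metric.ball x₀ Q, Real.exp (-α * dist x₀ x) ∂μ)
        atTop (nhds 0) := by
  intro α hα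
  have hhalf : (0 : ℝ) < α / 2 := by linarith
  -- eventually the log-volume ratio is < α/2
  have hev : ∀ᶠ R : ℝ in atTop,
      ENNReal.log (μ (Metric.ball x₀ R)) / (R : EReal) < ((α / 2 : ℝ) : EReal) := by
    apply Filter.eventually_lt_of_limsup_lt
    · rw [hvol]
      exact_mod_cast EReal.coe_pos.mpr hhalf
    · exact ⟨⊤, by simp⟩
  -- derive a volume bound
  have hbound : ∀ᶠ Q : ℝ in atTop, μ (Metric.ball x₀ Q) ≤
      ENNReal.ofReal (Real.exp (α / 2 * Q)) := by
    filter_upwards [hev, eventually_gt_atTop (0 : ℝ)] with Q hQ hQpos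
    have hQE : (0 : EReal) < (Q : EReal) := by exact_mod_cast hQpos
    have h1 : ENNReal.log (μ (Metric.ball x₀ Q)) ≤ (Q : EReal) * ((α / 2 : ℝ) : EReal) :=
      (EReal.div_le_iff_le_mul hQE (by simp)).mp hQ.le
    have h2 : ENNReal.log (μ (Metric.ball x₀ Q)) ≤ ((α / 2 * Q : ℝ) : EReal) := by
      rw [mul_comm] at h1; rw [EReal.coe_mul]; exact h1
    calc μ (Metric.ball x₀ Q) = EReal.exp (ENNReal.log (μ (Metric.ball x₀ Q))) :=
          (ENNReal.exp_log _).symm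
      _ ≤ EReal.exp ((α / 2 * Q : ℝ) : EReal) := EReal.exp_monotone h2
      _ = ENNReal.ofReal (Real.exp (α / 2 * Q)) := EReal.exp_coe _
  -- squeeze
  apply squeeze_zero_norm' (a := fun Q : ℝ => Real.exp (-(α/2) * Q))
  · filter_upwards [hbound] with Q hQ
    have hfin : μ (Metric.ball x₀ Q) < ⊤ :=
      lt_of_le_of_lt hQ ENNReal.ofReal_lt_top
    have hint : ‖∫ x in Metric.ball x₀ Q, Real.exp (-α * dist x₀ x) ∂μ‖ ≤
        1 * (μ (Metric.ball x₀ Q)).toReal := by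
      apply norm_setIntegral_le_of_norm_le_const hfin
      · intro x _
        rw [Real.norm_eq_abs, abs_of_pos (Real.exp_pos _)]
        apply Real.exp_le_one_iff.mpr
        have : (0 : ℝ) ≤ dist x₀ x := dist_nonneg
        nlinarith
    have htr : (μ (Metric.ball x₀ Q)).toReal ≤ Real.exp (α / 2 * Q) :=
      ENNReal.toReal_le_of_le_ofReal (Real.exp_pos _).le hQ
    rw [norm_mul, Real.norm_eq_abs, abs_of_pos (Real.exp_pos _)]
    calc Real.exp (-α * Q) * ‖∫ x in Metric.ball x₀ Q, Real.exp (-α * dist x₀ x) ∂μ‖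
        ≤ Real.exp (-α * Q) * (1 * (μ (Metric.ball x₀ Q)).toReal) := by
          exact mul_le_mul_of_nonneg_left hint (Real.exp_pos _).le
      _ ≤ Real.exp (-α * Q) * Real.exp (α / 2 * Q) := by
          rw [one_mul]
          exact mul_le_mul_of_nonneg_left htr (Real.exp_pos _).le
      _ = Real.exp (-(α/2) * Q) := by
          rw [← Real.exp_add]; ring_nf
  · have h1 : Tendsto (fun Q : ℝ => -(α/2) * Q) atTop atBot :=
      tendsto_id.const_mul_atTop_of_neg (by linarith)
    exact Real.tendsto_exp_atBot.comp h1
end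

section
/- Let (X,d) be a metric space, μ a Borel measure on X, x₀ ∈ X, r(x) = d(x₀,x), and B(x₀,t) the open ball of radius t about x₀. Assume μ has subexponential volume growth, i.e. limsup_{R→∞} ln(μ(B(x₀,R)))/R = 0. Then for every α > 0 the function x ↦ e^{-α r(x)} is μ-integrable on X: ∫_X e^{-α r(x)} dμ(x) < ∞. -/
/-!
A volume bound `μ(B(x₀, R)) ≤ C e^{βR}` with `β < α` suffices: as `x ∈ B(x₀, ⌊r(x)⌋ + 1)` and
`e^{-α r(x)} ≤ e^{-α ⌊r(x)⌋}`, the integral `∫ e^{-α r} dμ` is at most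
`∑ₙ e^{-αn} μ(B(x₀, n + 1)) ≤ C' ∑ₙ e^{-(α - β)n}`, a convergent geometric series.
Subexponential growth gives such a bound with `β = α / 2`.
-/

open Real MeasureTheory Filter

theorem eventually_le_ofReal_exp_of_limsup_log_div_lt {f : ℝ → ENNReal} {ε : ℝ}
    (h : limsup (fun R : ℝ => ENNReal.log (f R) / (R : EReal)) atTop < ε) :
    ∀ᶠ R in atTop, f R ≤ ENNReal.ofReal (exp (ε * R)) := by
  filter_upwards [eventually_lt_of_limsup_lt h, eventually_gt_atTop 0] with R hlt hR
  have hlog : ENNReal.log (f R) ≤ ((ε * R : ℝ) : EReal) := by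
    rw [mul_comm, EReal.coe_mul]
    exact (EReal.div_le_iff_le_mul (by exact_mod_cast hR) (EReal.coe_ne_top R)).mp hlt.le
  calc f R = EReal.exp (ENNReal.log (f R)) := (ENNReal.exp_log _).symm
    _ ≤ EReal.exp ((ε * R : ℝ) : EReal) := EReal.exp_monotone hlog
    _ = ENNReal.ofReal (exp (ε * R)) := EReal.exp_coe _

theorem exists_le_mul_ofReal_exp_of_eventually {f : ℝ → ENNReal} (hf : Monotone f) {β : ℝ}
    (hβ : 0 ≤ β) (h : ∀ᶠ R in atTop, f R ≤ ENNReal.ofReal (exp (β * R))) :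
    ∃ C ≠ ⊤, ∀ R, 0 ≤ R → f R ≤ C * ENNReal.ofReal (exp (β * R)) := by
  obtain ⟨N, hN⟩ := (h.and (eventually_ge_atTop 0)).exists_forall_of_atTop
  refine ⟨ENNReal.ofReal (exp (β * N)), ENNReal.ofReal_ne_top, fun R hR => ?_⟩
  have hNR : N ≤ max R N := le_max_right R N
  calc f R ≤ f (max R N) := hf (le_max_left R N)
    _ ≤ ENNReal.ofReal (exp (β * max R N)) := (hN _ hNR).1
    _ ≤ ENNReal.ofReal (exp (β * R + β * N)) := by
        gcongr
        rw [← mul_add]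
        exact mul_le_mul_of_nonneg_left (max_le_add_of_nonneg hR (hN N le_rfl).2) hβ
    _ = ENNReal.ofReal (exp (β * N)) * ENNReal.ofReal (exp (β * R)) := by
        rw [exp_add, ENNReal.ofReal_mul (exp_nonneg _), mul_comm]

theorem tsum_ofReal_exp_neg_mul_lt_top {f : ℝ → ENNReal} {α β : ℝ} {C : ENNReal} (hβα : β < α)
    (hC : C ≠ ⊤) (hf : ∀ R, 0 ≤ R → f R ≤ C * ENNReal.ofReal (exp (β * R))) :
    ∑' n : ℕ, ENNReal.ofReal (exp (-α * n)) * f (n + 1) < ⊤ := by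
  set q := ENNReal.ofReal (exp (-(α - β)))
  have hterm : ∀ n : ℕ, ENNReal.ofReal (exp (-α * n)) * f (n + 1) ≤
      C * ENNReal.ofReal (exp β) * q ^ n := fun n => by
    calc ENNReal.ofReal (exp (-α * n)) * f (n + 1)
        ≤ ENNReal.ofReal (exp (-α * n)) * (C * ENNReal.ofReal (exp (β * (n + 1)))) := by
          gcongr
          exact hf _ (by positivity)
      _ = C * ENNReal.ofReal (exp β) * q ^ n := by
          rw [mul_left_comm, mul_assoc, ← ENNReal.ofReal_mul (exp_nonneg _), ← exp_add,
            ← ENNReal.ofReal_pow (exp_nonneg _), ← exp_nat_mul,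
            ← ENNReal.ofReal_mul (exp_nonneg _), ← exp_add]
          ring_nf
  have hq : q < 1 := by
    rw [ENNReal.ofReal_lt_one, Real.exp_lt_one_iff]
    linarith
  calc ∑' n : ℕ, ENNReal.ofReal (exp (-α * n)) * f (n + 1)
      ≤ ∑' n : ℕ, C * ENNReal.ofReal (exp β) * q ^ n := ENNReal.tsum_le_tsum hterm
    _ < ⊤ := by
      rw [ENNReal.tsum_mul_left, ENNReal.tsum_geometric]
      exact ENNReal.mul_lt_top (ENNReal.mul_lt_top hC.lt_top ENNReal.ofReal_lt_top)
        (ENNReal.inv_lt_top.mpr (tsub_pos_of_lt hq))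

theorem lintegral_ofReal_exp_neg_mul_dist_le_tsum {X : Type*} [MetricSpace X]
    [MeasurableSpace X] [OpensMeasurableSpace X] (μ : Measure X) (x₀ : X) {α : ℝ} (hα : 0 ≤ α) :
    ∫⁻ x, ENNReal.ofReal (exp (-α * dist x₀ x)) ∂μ ≤
      ∑' n : ℕ, ENNReal.ofReal (exp (-α * n)) * μ (Metric.ball x₀ (n + 1)) := by
  have hpoint : ∀ x, ENNReal.ofReal (exp (-α * dist x₀ x)) ≤ ∑' n : ℕ,
      (Metric.ball x₀ (n + 1)).indicator (fun _ => ENNReal.ofReal (exp (-α * n))) x := by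
    intro x
    set n := ⌊dist x₀ x⌋₊
    have hn : (n : ℝ) ≤ dist x₀ x := Nat.floor_le dist_nonneg
    have hx : x ∈ Metric.ball x₀ (n + 1) := by
      rw [Metric.mem_ball, dist_comm]
      exact Nat.lt_floor_add_one _
    refine le_trans ?_ (ENNReal.le_tsum n)
    rw [Set.indicator_of_mem hx]
    exact ENNReal.ofReal_le_ofReal (exp_le_exp.mpr (by nlinarith))
  calc ∫⁻ x, ENNReal.ofReal (exp (-α * dist x₀ x)) ∂μ
      ≤ ∫⁻ x, ∑' n : ℕ,
          (Metric.ball x₀ (n + 1)).indicator (fun _ => ENNReal.ofReal (exp (-α * n))) x ∂μ :=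
        lintegral_mono hpoint
    _ = ∑' n : ℕ, ENNReal.ofReal (exp (-α * n)) * μ (Metric.ball x₀ (n + 1)) := by
        rw [lintegral_tsum fun n => (measurable_const.indicator measurableSet_ball).aemeasurable]
        simp only [lintegral_indicator_const measurableSet_ball]

/-- Under subexponential volume growth (`limsup_{R→∞} ln(μ(B(x₀,R)))/R = 0`), for every
`α > 0` the function `x ↦ e^{-α r(x)}`, `r(x) = d(x₀,x)`, is `μ`-integrable. -/
theorem stmt_6 {X : Type*} [MetricSpace X] [MeasurableSpace X] [BorelSpace X]
    (μ : Measure X) (x₀ : X)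
    (hvol : Filter.limsup
        (fun R : ℝ => ENNReal.log (μ (Metric.ball x₀ R)) / (R : EReal)) Filter.atTop = 0) :
    ∀ α > 0, Integrable (fun x => Real.exp (-α * dist x₀ x)) μ := by
  intro α hα
  have hgrowth := eventually_le_ofReal_exp_of_limsup_log_div_lt (ε := α / 2)
    (hvol.trans_lt (by exact_mod_cast half_pos hα))
  obtain ⟨C, hC, hball⟩ := exists_le_mul_ofReal_exp_of_eventually
    (fun R S hRS => measure_mono (Metric.ball_subset_ball hRS)) (half_pos hα).le hgrowth
  refine ⟨(by fun_prop : Continuous fun x => exp (-α * dist x₀ x)).aestronglyMeasurable, ?_⟩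
  rw [hasFiniteIntegral_iff_ofReal (Eventually.of_forall fun x => (exp_pos _).le)]
  exact (lintegral_ofReal_exp_neg_mul_dist_le_tsum μ x₀ hα.le).trans_lt
    (tsum_ofReal_exp_neg_mul_lt_top (half_lt_self hα) hC hball)
end

section
/- Let (X,d) be a metric space, μ a Borel measure on X, x₀ ∈ X, r(x) = d(x₀,x), and B(x₀,t) the open ball of radius t about x₀. Let α > 0 and assume μ has (2α+2)-subpolynomial volume growth, i.e. limsup_{R→∞} μ(B(x₀,R))/R^{2α+2} = 0. Then for every ε > 0, lim_{Q→∞} (1 + εQ)^{-α} ∫_{B(x₀,Q)} (1 + ε r(x))^{-α-2} dμ(x) = 0. -/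
/-!
The integral `I Q = ∫_{B(x₀,Q)} (1 + ε r)^(-α-2) dμ` is monotone in `Q`, and its increment
over the shell `B(x₀,2R) \ B(x₀,R)` is at most `(εR)^(-α-2) μ(B(x₀,2R)) = o(R^α)`. Summing
over dyadic shells, whose contributions grow geometrically with ratio `2^α > 1`, gives
`I Q = o(Q^α)`, while `(1 + εQ)^(-α) = O(Q^(-α))`.
-/

open Real MeasureTheory Filter Asymptotics Metric Set

theorem Monotone.le_add_mul_rpow_of_le_add_mul_rpow {I : ℝ → ℝ} (hI : Monotone I)
    {α δ R₀ : ℝ} (hα : 0 < α) (hδ : 0 ≤ δ) (hR₀ : 0 < R₀)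
    (hinc : ∀ R ≥ R₀, I (2 * R) ≤ I R + δ * R ^ α) {Q : ℝ} (hQ : R₀ ≤ Q) :
    I Q ≤ I (2 * R₀) + δ / (2 ^ α - 1) * Q ^ α := by
  have h2α : 0 < (2 : ℝ) ^ α - 1 := sub_pos.2 (one_lt_rpow one_lt_two hα)
  -- `C` is the fixed point of `C ↦ (C + δ) / 2 ^ α`: this makes the induction over scales close.
  set C := δ / (2 ^ α - 1)
  have hC0 : 0 ≤ C := div_nonneg hδ h2α.le
  have hC : C * 2 ^ α = C + δ := by simp only [C]; field_simp; ring
  have hscale : ∀ n : ℕ, ∀ Q, R₀ ≤ Q → Q ≤ 2 ^ n * (2 * R₀) →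
      I Q ≤ I (2 * R₀) + C * Q ^ α := by
    intro n
    induction n with
    | zero =>
      intro Q hQ hQn
      have : 0 ≤ C * Q ^ α := mul_nonneg hC0 (rpow_nonneg (by linarith) _)
      linarith [hI (by simpa using hQn : Q ≤ 2 * R₀)]
    | succ n ih =>
      intro Q hQ hQn
      rcases le_or_gt Q (2 * R₀) with hQ2 | hQ2
      · exact ih Q hQ <|
          hQ2.trans (le_mul_of_one_le_left (by positivity) (one_le_pow₀ one_le_two))
      · have hhalf := ih (Q / 2) (by linarith) (by rw [pow_succ] at hQn; linarith)
        have hstep := hinc (Q / 2) (by linarith)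
        rw [mul_div_cancel₀ Q two_ne_zero] at hstep
        have hpow : C * Q ^ α = (C + δ) * (Q / 2) ^ α := by
          rw [← hC, mul_assoc, mul_comm (2 ^ α), ← mul_rpow (by linarith) zero_le_two,
            div_mul_cancel₀ Q two_ne_zero]
        linarith
  obtain ⟨n, hn⟩ := pow_unbounded_of_one_lt (Q / (2 * R₀)) one_lt_two
  exact hscale n Q hQ ((div_le_iff₀ (by positivity)).1 hn.le)

theorem Monotone.isLittleO_rpow_of_isLittleO_sub {I : ℝ → ℝ} (hI : Monotone I) {α : ℝ}
    (hα : 0 < α) (h : (fun R => I (2 * R) - I R) =o[atTop] fun R => R ^ α) :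
    I =o[atTop] fun R => R ^ α := by
  refine IsLittleO.of_bound fun c hc => ?_
  have h2α : 0 < (2 : ℝ) ^ α - 1 := sub_pos.2 (one_lt_rpow one_lt_two hα)
  set δ := c / 2 * (2 ^ α - 1)
  obtain ⟨R₁, hR₁⟩ := eventually_atTop.1 (h.bound (by positivity : 0 < δ))
  set R₀ := max R₁ 1
  have hR₀ : 0 < R₀ := lt_max_of_lt_right one_pos
  have hinc : ∀ R ≥ R₀, I (2 * R) ≤ I R + δ * R ^ α := by
    intro R hR
    have := hR₁ R (le_of_max_le_left hR)
    rw [norm_of_nonneg (rpow_nonneg (by linarith) _)] at this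
    linarith [le_abs_self (I (2 * R) - I R), Real.norm_eq_abs (I (2 * R) - I R)]
  have hconst : ∀ᶠ Q in atTop, |I R₀| + |I (2 * R₀)| ≤ c / 2 * Q ^ α :=
    ((tendsto_rpow_atTop hα).const_mul_atTop (half_pos hc)).eventually_ge_atTop _
  filter_upwards [eventually_ge_atTop R₀, hconst] with Q hQ hK
  have hQα : 0 ≤ Q ^ α := rpow_nonneg (by linarith) _
  have hupper := hI.le_add_mul_rpow_of_le_add_mul_rpow hα (by positivity) hR₀ hinc hQ
  rw [show δ / (2 ^ α - 1) = c / 2 by simp only [δ]; field_simp] at hupper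
  rw [Real.norm_eq_abs, Real.norm_eq_abs, abs_of_nonneg hQα, abs_le]
  constructor
  · linarith [hI hQ, neg_abs_le (I R₀), abs_nonneg (I (2 * R₀)), mul_nonneg hc.le hQα]
  · linarith [le_abs_self (I (2 * R₀)), abs_nonneg (I R₀)]

theorem measure_ball_ne_top_of_eventually {X : Type*} [PseudoMetricSpace X] [MeasurableSpace X]
    {μ : Measure X} {x₀ : X} (h : ∀ᶠ R in atTop, μ (ball x₀ R) ≠ ⊤) (R : ℝ) :
    μ (ball x₀ R) ≠ ⊤ := by
  obtain ⟨R', hfin, hRR'⟩ := (h.and (eventually_ge_atTop R)).exists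
  exact ne_top_of_le_ne_top hfin (measure_mono (ball_subset_ball hRR'))

section RadialProfile

variable {X : Type*} [PseudoMetricSpace X] [MeasurableSpace X] [OpensMeasurableSpace X]
  {μ : Measure X} {x₀ : X} {f : ℝ → ℝ}

theorem integrableOn_ball_comp_dist (hf : Measurable f) (hf0 : ∀ t, 0 ≤ t → 0 ≤ f t)
    (hanti : AntitoneOn f (Ici 0)) {R : ℝ} (hR : μ (ball x₀ R) ≠ ⊤) :
    IntegrableOn (fun x => f (dist x₀ x)) (ball x₀ R) μ :=
  Measure.integrableOn_of_bounded hR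
    (hf.comp (continuous_const.dist continuous_id).measurable).aestronglyMeasurable
    (M := f 0) <| ae_of_all _ fun x => by
      rw [Real.norm_of_nonneg (hf0 _ dist_nonneg)]
      exact hanti self_mem_Ici (mem_Ici.2 dist_nonneg) dist_nonneg

theorem monotone_setIntegral_ball_comp_dist (hf : Measurable f) (hf0 : ∀ t, 0 ≤ t → 0 ≤ f t)
    (hanti : AntitoneOn f (Ici 0)) (hfin : ∀ R, μ (ball x₀ R) ≠ ⊤) :
    Monotone fun R => ∫ x in ball x₀ R, f (dist x₀ x) ∂μ := fun _ _ hrR =>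
  setIntegral_mono_set (integrableOn_ball_comp_dist hf hf0 hanti (hfin _))
    (ae_of_all _ fun _ => hf0 _ dist_nonneg) (ball_subset_ball hrR).eventuallyLE

theorem setIntegral_ball_comp_dist_sub_le (hf : Measurable f) (hf0 : ∀ t, 0 ≤ t → 0 ≤ f t)
    (hanti : AntitoneOn f (Ici 0)) {r R : ℝ} (hr : 0 ≤ r) (hrR : r ≤ R)
    (hR : μ (ball x₀ R) ≠ ⊤) :
    ∫ x in ball x₀ R, f (dist x₀ x) ∂μ - ∫ x in ball x₀ r, f (dist x₀ x) ∂μ ≤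
      f r * μ.real (ball x₀ R) := by
  have hint := integrableOn_ball_comp_dist hf hf0 hanti hR
  rw [← setIntegral_sdiff measurableSet_ball hint (ball_subset_ball hrR)]
  calc ∫ x in ball x₀ R \ ball x₀ r, f (dist x₀ x) ∂μ
      ≤ ∫ _ in ball x₀ R \ ball x₀ r, f r ∂μ := by
        refine setIntegral_mono_on (hint.mono_set sdiff_subset)
          (integrableOn_const (ne_top_of_le_ne_top hR (measure_mono sdiff_subset)))
          (measurableSet_ball.diff measurableSet_ball) fun x hx => ?_
        have hrx : r ≤ dist x₀ x := by
          simpa [mem_ball, dist_comm] using hx.2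
        exact hanti hr (mem_Ici.2 dist_nonneg) hrx
    _ = f r * μ.real (ball x₀ R \ ball x₀ r) := by rw [setIntegral_const, smul_eq_mul, mul_comm]
    _ ≤ f r * μ.real (ball x₀ R) :=
        mul_le_mul_of_nonneg_left (measureReal_mono sdiff_subset hR) (hf0 r hr)

theorem isLittleO_setIntegral_ball_comp_dist (hf : Measurable f) (hf0 : ∀ t, 0 ≤ t → 0 ≤ f t)
    (hanti : AntitoneOn f (Ici 0)) (hfin : ∀ R, μ (ball x₀ R) ≠ ⊤) {α : ℝ} (hα : 0 < α)
    (hshell : (fun R => f R * μ.real (ball x₀ (2 * R))) =o[atTop] (· ^ α)) :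
    (fun Q => ∫ x in ball x₀ Q, f (dist x₀ x) ∂μ) =o[atTop] (· ^ α) := by
  have hmono := monotone_setIntegral_ball_comp_dist hf hf0 hanti hfin
  refine hmono.isLittleO_rpow_of_isLittleO_sub hα <| (IsBigO.of_bound' ?_).trans_isLittleO hshell
  filter_upwards [eventually_ge_atTop 0] with R hR
  rw [Real.norm_of_nonneg (sub_nonneg.2 (hmono (by linarith))),
    Real.norm_of_nonneg (mul_nonneg (hf0 R hR) measureReal_nonneg)]
  exact setIntegral_ball_comp_dist_sub_le hf hf0 hanti hR (by linarith) (hfin _)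

end RadialProfile

theorem ENNReal.isLittleO_toReal_of_limsup_div_eq_zero {ι : Type*} {l : Filter ι}
    {u : ι → ENNReal} {g : ι → ℝ} (hg : ∀ᶠ x in l, 0 < g x)
    (h : limsup (fun x => u x / ENNReal.ofReal (g x)) l = 0) :
    (∀ᶠ x in l, u x ≠ ⊤) ∧ (fun x => (u x).toReal) =o[l] g := by
  have ht : Tendsto (fun x => u x / ENNReal.ofReal (g x)) l (nhds 0) :=
    tendsto_of_le_liminf_of_limsup_le bot_le h.le
  constructor
  · filter_upwards [ht.eventually_lt_const zero_lt_one] with x hx hux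
    rw [hux, ENNReal.top_div_of_ne_top ENNReal.ofReal_ne_top] at hx
    exact not_top_lt hx
  · refine (isLittleO_iff_tendsto' (hg.mono fun x hx h0 => absurd h0 hx.ne')).2 ?_
    refine ((ENNReal.tendsto_toReal ENNReal.zero_ne_top).comp ht).congr' ?_
    filter_upwards [hg] with x hx
    simp [ENNReal.toReal_div, ENNReal.toReal_ofReal hx.le]

theorem isBigO_one_add_mul_rpow {ε s : ℝ} (hε : 0 < ε) (hs : s ≤ 0) :
    (fun t : ℝ => (1 + ε * t) ^ s) =O[atTop] fun t => t ^ s := by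
  refine IsBigO.of_bound (ε ^ s) ?_
  filter_upwards [eventually_gt_atTop 0] with t ht
  rw [Real.norm_of_nonneg (rpow_nonneg (by positivity) _),
    Real.norm_of_nonneg (rpow_nonneg ht.le _), ← mul_rpow hε.le ht.le]
  exact rpow_le_rpow_of_nonpos (by positivity) (by linarith) hs

theorem isLittleO_mul_comp_two_mul {f V : ℝ → ℝ} {a b c : ℝ} (hf : f =O[atTop] (· ^ a))
    (hV : V =o[atTop] (· ^ b)) (habc : a + b = c) :
    (fun R => f R * V (2 * R)) =o[atTop] (· ^ c) := by
  have hV2 : (fun R => V (2 * R)) =o[atTop] (· ^ b) := by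
    refine (hV.comp_tendsto (tendsto_id.const_mul_atTop two_pos)).trans_isBigO ?_
    refine IsBigO.of_bound (2 ^ b) ?_
    filter_upwards [eventually_ge_atTop 0] with R hR
    rw [Function.comp_apply, id, mul_rpow zero_le_two hR, norm_mul,
      Real.norm_of_nonneg (rpow_nonneg zero_le_two b)]
  refine (hf.mul_isLittleO hV2).congr' EventuallyEq.rfl ?_
  filter_upwards [eventually_gt_atTop 0] with R hR
  rw [← rpow_add hR, habc]

/-- Under `(2α+2)`-subpolynomial volume growth (`limsup_{R→∞} μ(B(x₀,R))/R^{2α+2} = 0`),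
for every `ε > 0` one has `(1+εQ)^{-α} ∫_{B(x₀,Q)} (1+εr)^{-α-2} dμ → 0` as `Q → ∞`. -/
theorem stmt_7 {X : Type*} [MetricSpace X] [MeasurableSpace X] [BorelSpace X]
    (μ : Measure X) (x₀ : X) (α : ℝ) (hα : 0 < α)
    (hvol : Filter.limsup
        (fun R : ℝ => μ (Metric.ball x₀ R) / ENNReal.ofReal (R ^ (2 * α + 2)))
        Filter.atTop = 0) :
    ∀ ε > 0,
      Tendsto
        (fun Q : ℝ =>
          (1 + ε * Q) ^ (-α) *
            ∫ x in Metric.ball x₀ Q, (1 + ε * dist x₀ x) ^ (-α - 2) ∂μ)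
        atTop (nhds 0) := by
  intro ε hε
  obtain ⟨hfin, hvol⟩ := ENNReal.isLittleO_toReal_of_limsup_div_eq_zero
    ((eventually_gt_atTop 0).mono fun R hR => rpow_pos_of_pos hR _) hvol
  have hf : Measurable fun t : ℝ => (1 + ε * t) ^ (-α - 2) := by fun_prop
  have hf0 : ∀ t : ℝ, 0 ≤ t → 0 ≤ (1 + ε * t) ^ (-α - 2) := fun t ht =>
    rpow_nonneg (by positivity) _
  have hanti : AntitoneOn (fun t : ℝ => (1 + ε * t) ^ (-α - 2)) (Ici 0) := fun s hs t _ hst =>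
    rpow_le_rpow_of_nonpos (by have : (0 : ℝ) ≤ s := hs; positivity) (by gcongr) (by linarith)
  have hI := isLittleO_setIntegral_ball_comp_dist hf hf0 hanti
    (measure_ball_ne_top_of_eventually hfin) hα
    (isLittleO_mul_comp_two_mul (isBigO_one_add_mul_rpow hε (by linarith)) hvol (by ring))
  rw [← isLittleO_one_iff ℝ]
  refine ((isBigO_one_add_mul_rpow hε (neg_nonpos.2 hα.le)).mul_isLittleO hI).congr'
    EventuallyEq.rfl ?_
  filter_upwards [eventually_gt_atTop 0] with Q hQ
  rw [← rpow_add hQ, neg_add_cancel, rpow_zero]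
end

section
/- Let (X,d) be a metric space, μ a Borel measure on X, x₀ ∈ X, r(x) = d(x₀,x), and B(x₀,t) the open ball of radius t about x₀. Let a ∈ (0, 1/4), c > 0 and A ≥ 0. Assume: (1) there exist k > 0 and C > 0 with μ(B(x₀,t)) ≤ C(1+t)^k for all t > 0; (2) for every Q > 0, ε > 0 and α > 0, writing ξ(t) = (1+εt)^{-α} - (1+εQ)^{-α}, one has c ∫_{B(x₀,Q)} ξ(r(x))² dμ(x) ≤ A·ξ(0)² + ε²α((1-4a)α - 2a) ∫_{B(x₀,Q)} (1+ε r(x))^{-2α-2} dμ(x) + 2a·ε²·α(α+1)·(1+εQ)^{-α} ∫_{B(x₀,Q)} (1+ε r(x))^{-α-2} dμ(x). Then k₀ := inf{ k > 0 : there exists C > 0 with μ(B(x₀,t)) ≤ C(1+t)^k for all t > 0 } satisfies k₀ < 2 + 4a/(1-4a). -/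
/-!
Testing the stability inequality with `α = 1`, `ε = 1/(2R)` and `Q = 2R` gives `ξ ≥ 1/6` on
`B(x₀, R)`, while both weights on the right are at most `1`; hence
`c μ(B_R) ≤ 9A + 18 μ(B_{2R}) / R²`. Growth of order `k` therefore improves to growth of order
`max (k - 2) 0`, and finitely many rounds give growth of order `2 < 2 + 4a/(1-4a)`.
-/

open Real MeasureTheory Metric

theorem one_add_two_mul_rpow_div_sq_le {R k m : ℝ} (hR : 1 ≤ R) (hk : 0 ≤ k) (hkm : k - 2 ≤ m) :
    (1 + 2 * R) ^ k / R ^ 2 ≤ 4 * 2 ^ k * (1 + R) ^ m := by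
  have h1R : 0 < 1 + R := by linarith
  rw [div_le_iff₀ (by positivity)]
  calc (1 + 2 * R) ^ k ≤ (2 * (1 + R)) ^ k := rpow_le_rpow (by linarith) (by linarith) hk
    _ = 2 ^ k * ((1 + R) ^ (k - 2) * (1 + R) ^ 2) := by
      rw [mul_rpow (by norm_num) h1R.le, ← rpow_natCast, ← rpow_add h1R]
      norm_num
    _ ≤ 2 ^ k * ((1 + R) ^ m * (4 * R ^ 2)) := by
      gcongr
      · linarith
      · nlinarith
    _ = 4 * 2 ^ k * (1 + R) ^ m * R ^ 2 := by ring

section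

variable {X : Type*} [PseudoMetricSpace X]

theorem one_add_mul_dist_rpow_mem_Icc {x₀ : X} {ε p : ℝ} (hε : 0 ≤ ε) (hp : p ≤ 0) (x : X) :
    (1 + ε * dist x₀ x) ^ p ∈ Set.Icc (0:ℝ) 1 :=
  have h1 : 1 ≤ 1 + ε * dist x₀ x := le_add_of_nonneg_right (by positivity)
  ⟨rpow_nonneg (zero_le_one.trans h1) _, rpow_le_one_of_one_le_of_nonpos h1 hp⟩

variable [MeasurableSpace X] {μ : Measure X} {x₀ : X}

variable (μ x₀) in
def HasPolyGrowth (k : ℝ) : Prop :=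
  ∃ C > (0:ℝ), ∀ t > (0:ℝ), μ (ball x₀ t) ≤ ENNReal.ofReal (C * (1 + t) ^ k)

variable (μ x₀) in
/-- Inequality (E-T1-3) for the test functions `ξ(t) = (1+εt)^{-α} - (1+εQ)^{-α}`. -/
def StabilityInequality (a c A : ℝ) : Prop :=
  ∀ Q > (0:ℝ), ∀ ε > (0:ℝ), ∀ α > (0:ℝ),
    c * ∫ x in ball x₀ Q, ((1 + ε * dist x₀ x) ^ (-α) - (1 + ε * Q) ^ (-α)) ^ 2 ∂μ
      ≤ A * ((1 + ε * 0) ^ (-α) - (1 + ε * Q) ^ (-α)) ^ 2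
        + ε ^ 2 * α * ((1 - 4 * a) * α - 2 * a) *
            ∫ x in ball x₀ Q, (1 + ε * dist x₀ x) ^ (-2 * α - 2) ∂μ
        + 2 * a * ε ^ 2 * α * (α + 1) * (1 + ε * Q) ^ (-α) *
            ∫ x in ball x₀ Q, (1 + ε * dist x₀ x) ^ (-α - 2) ∂μ

theorem HasPolyGrowth.measure_ball_ne_top {k t : ℝ} (h : HasPolyGrowth μ x₀ k) (ht : 0 < t) :
    μ (ball x₀ t) ≠ ⊤ := by
  obtain ⟨C, -, hC⟩ := h
  exact ((hC t ht).trans_lt ENNReal.ofReal_lt_top).ne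

theorem HasPolyGrowth.of_forall_one_le {m C : ℝ} (hm : 0 ≤ m) (hC : 0 < C)
    (h : ∀ R ≥ (1:ℝ), μ (ball x₀ R) ≤ ENNReal.ofReal (C * (1 + R) ^ m)) :
    HasPolyGrowth μ x₀ m := by
  refine ⟨C * 2 ^ m, by positivity, fun t ht => ?_⟩
  have h2m : (1:ℝ) ≤ 2 ^ m := one_le_rpow (by norm_num) hm
  have htm : (1:ℝ) ≤ (1 + t) ^ m := one_le_rpow (by linarith) hm
  rcases le_or_gt 1 t with h1t | h1t
  · refine (h t h1t).trans (ENNReal.ofReal_le_ofReal ?_)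
    nlinarith [mul_le_mul_of_nonneg_left h2m (mul_nonneg hC.le (zero_le_one.trans htm))]
  · calc μ (ball x₀ t) ≤ μ (ball x₀ 1) := measure_mono (ball_subset_ball h1t.le)
      _ ≤ ENNReal.ofReal (C * (1 + 1) ^ m) := h 1 le_rfl
      _ ≤ ENNReal.ofReal (C * 2 ^ m * (1 + t) ^ m) := by
        refine ENNReal.ofReal_le_ofReal ?_
        norm_num
        exact le_mul_of_one_le_right (by positivity) htm

theorem HasPolyGrowth.of_measureReal_ball_le {c B D k m : ℝ} (hc : 0 < c) (hB : 0 ≤ B)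
    (hD : 0 < D)
    (hkey : ∀ R > (0:ℝ), c * μ.real (ball x₀ R) ≤ B + D * μ.real (ball x₀ (2 * R)) / R ^ 2)
    (hk : HasPolyGrowth μ x₀ k) (hk0 : 0 ≤ k) (hm : 0 ≤ m) (hkm : k - 2 ≤ m) :
    HasPolyGrowth μ x₀ m := by
  obtain ⟨C, hC, hball⟩ := id hk
  refine .of_forall_one_le hm (C := (B + 4 * 2 ^ k * D * C) / c) (by positivity) fun R hR => ?_
  have hR0 : 0 < R := by linarith
  have h2R : μ.real (ball x₀ (2 * R)) ≤ C * (1 + 2 * R) ^ k :=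
    ENNReal.toReal_le_of_le_ofReal (by positivity) (hball _ (by positivity))
  have hbound : c * μ.real (ball x₀ R) ≤ c * ((B + 4 * 2 ^ k * D * C) / c * (1 + R) ^ m) :=
    calc c * μ.real (ball x₀ R) ≤ B + D * μ.real (ball x₀ (2 * R)) / R ^ 2 := hkey R hR0
      _ ≤ B * (1 + R) ^ m + D * (C * (1 + 2 * R) ^ k) / R ^ 2 := by
        gcongr
        exact le_mul_of_one_le_right hB (one_le_rpow (by linarith) hm)
      _ ≤ B * (1 + R) ^ m + D * C * (4 * 2 ^ k * (1 + R) ^ m) := by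
        rw [← mul_assoc, mul_div_assoc]
        gcongr
        exact one_add_two_mul_rpow_div_sq_le hR hk0 hkm
      _ = c * ((B + 4 * 2 ^ k * D * C) / c * (1 + R) ^ m) := by
        field_simp
  rw [← ENNReal.ofReal_toReal (hk.measure_ball_ne_top hR0)]
  exact ENNReal.ofReal_le_ofReal (le_of_mul_le_mul_left hbound hc)

theorem HasPolyGrowth.two_of_measureReal_ball_le {c B D k : ℝ} (hc : 0 < c) (hB : 0 ≤ B)
    (hD : 0 < D)
    (hkey : ∀ R > (0:ℝ), c * μ.real (ball x₀ R) ≤ B + D * μ.real (ball x₀ (2 * R)) / R ^ 2)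
    (hk : HasPolyGrowth μ x₀ k) (hk0 : 0 ≤ k) :
    HasPolyGrowth μ x₀ 2 := by
  obtain ⟨n, hn⟩ := exists_nat_ge k
  induction n generalizing k with
  | zero =>
    push_cast at hn
    exact hk.of_measureReal_ball_le hc hB hD hkey hk0 zero_le_two (by linarith)
  | succ n ih =>
    refine ih (hk.of_measureReal_ball_le hc hB hD hkey hk0 (le_max_right _ 0) (le_max_left _ _))
      (le_max_right _ _) (max_le ?_ n.cast_nonneg)
    push_cast at hn
    linarith

theorem setIntegral_one_add_mul_dist_rpow_mem_Icc {ε p : ℝ} {s : Set X} (hε : 0 ≤ ε)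
    (hp : p ≤ 0) (hs : μ s ≠ ⊤) :
    ∫ x in s, (1 + ε * dist x₀ x) ^ p ∂μ ∈ Set.Icc 0 (μ.real s) := by
  have hw := one_add_mul_dist_rpow_mem_Icc (x₀ := x₀) hε hp
  refine ⟨integral_nonneg fun x => (hw x).1, (Real.le_norm_self _).trans ?_⟩
  have := norm_setIntegral_le_of_norm_le_const (C := 1) hs.lt_top fun x _ => by
    rw [norm_of_nonneg (hw x).1]
    exact (hw x).2
  rwa [one_mul] at this

variable [OpensMeasurableSpace X]

theorem measureReal_ball_le_mul_setIntegral {R : ℝ} (hR : 0 < R)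
    (hfin : μ (ball x₀ (2 * R)) ≠ ⊤) :
    μ.real (ball x₀ R)
      ≤ 36 * ∫ x in ball x₀ (2 * R), ((1 + (2 * R)⁻¹ * dist x₀ x) ^ (-1:ℝ) - 1 / 2) ^ 2 ∂μ := by
  set ε := (2 * R)⁻¹ with hε
  have hε0 : 0 < ε := by positivity
  have hpos : ∀ x, 0 < 1 + ε * dist x₀ x := fun x => by positivity
  have hw := one_add_mul_dist_rpow_mem_Icc (x₀ := x₀) hε0.le neg_one_lt_zero.le
  have hcont : Continuous fun x => (1 + ε * dist x₀ x) ^ (-1:ℝ) :=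
    (continuous_const.add (continuous_const.mul (continuous_const.dist continuous_id))).rpow_const
      fun x => .inl (hpos x).ne'
  have hint : IntegrableOn (fun x => ((1 + ε * dist x₀ x) ^ (-1:ℝ) - 1 / 2) ^ 2)
      (ball x₀ (2 * R)) μ :=
    Measure.integrableOn_of_bounded (M := 1) hfin
      ((hcont.sub continuous_const).pow 2).aestronglyMeasurable
      (ae_of_all _ fun x => by
        rw [norm_of_nonneg (sq_nonneg _)]
        obtain ⟨h₀, h₁⟩ := hw x
        nlinarith)
  have hge : ∀ x ∈ ball x₀ R, 1 / 36 ≤ ((1 + ε * dist x₀ x) ^ (-1:ℝ) - 1 / 2) ^ 2 := by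
    intro x hx
    have hεd : ε * dist x₀ x ≤ 1 / 2 := by
      rw [hε, inv_mul_le_iff₀ (by positivity)]
      linarith [mem_ball'.mp hx]
    have : 2 / 3 ≤ (1 + ε * dist x₀ x) ^ (-1:ℝ) := by
      rw [rpow_neg_one, le_inv_comm₀ (by norm_num) (hpos x)]
      linarith
    nlinarith
  have hsub : ball x₀ R ⊆ ball x₀ (2 * R) := ball_subset_ball (by linarith)
  calc μ.real (ball x₀ R) = 36 * (1 / 36 * μ.real (ball x₀ R)) := by ring
    _ ≤ 36 * ∫ x in ball x₀ R, ((1 + ε * dist x₀ x) ^ (-1:ℝ) - 1 / 2) ^ 2 ∂μ := by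
      gcongr
      exact setIntegral_ge_of_const_le_real measurableSet_ball
        (ne_top_of_le_ne_top hfin (measure_mono hsub)) hge (hint.mono_set hsub)
    _ ≤ _ := mul_le_mul_of_nonneg_left
      (setIntegral_mono_set hint (ae_of_all _ fun _ => sq_nonneg _) hsub.eventuallyLE) (by norm_num)

theorem StabilityInequality.measureReal_ball_le {a c A R : ℝ}
    (hstab : StabilityInequality μ x₀ a c A) (ha₀ : 0 ≤ a) (ha₁ : a ≤ 1 / 2) (hc : 0 ≤ c)
    (hR : 0 < R) (hfin : μ (ball x₀ (2 * R)) ≠ ⊤) :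
    c * μ.real (ball x₀ R) ≤ 9 * A + 18 * μ.real (ball x₀ (2 * R)) / R ^ 2 := by
  set ε := (2 * R)⁻¹ with hε
  have hε0 : 0 < ε := by positivity
  have hQ : (1 + ε * (2 * R)) ^ (-1:ℝ) = 1 / 2 := by
    rw [inv_mul_cancel₀ (by positivity), rpow_neg_one]
    norm_num
  have hst := hstab (2 * R) (by positivity) ε hε0 1 one_pos
  rw [hQ, mul_zero, add_zero, one_rpow] at hst
  set M := μ.real (ball x₀ (2 * R))
  set I₂ := ∫ x in ball x₀ (2 * R), (1 + ε * dist x₀ x) ^ (-2 * (1:ℝ) - 2) ∂μ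
  set I₃ := ∫ x in ball x₀ (2 * R), (1 + ε * dist x₀ x) ^ (-(1:ℝ) - 2) ∂μ
  obtain ⟨hI₂₀, hI₂⟩ : I₂ ∈ Set.Icc 0 M :=
    setIntegral_one_add_mul_dist_rpow_mem_Icc hε0.le (by norm_num) hfin
  obtain ⟨hI₃₀, hI₃⟩ : I₃ ∈ Set.Icc 0 M :=
    setIntegral_one_add_mul_dist_rpow_mem_Icc hε0.le (by norm_num) hfin
  have hweights : ((1 - 4 * a) * 1 - 2 * a) * I₂ + 2 * a * (1 + 1) * (1 / 2) * I₃ ≤ 2 * M := by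
    nlinarith
  have hM : 18 * M / R ^ 2 = 36 * (ε ^ 2 * (2 * M)) := by
    rw [hε]
    field_simp
    ring
  nlinarith [mul_le_mul_of_nonneg_left (measureReal_ball_le_mul_setIntegral hR hfin) hc,
    mul_le_mul_of_nonneg_left hweights (sq_nonneg ε)]

end

/-- Bootstrap Claim in Theorem 2 (case iii): if `a ∈ (0,1/4)`, `c > 0`, `A ≥ 0`, `μ` has
polynomial volume growth of some order `k > 0`, and the stability inequality (E-T1-3)
holds for all test functions `ξ(t) = (1+εt)^{-α} - (1+εQ)^{-α}`, then the infimum `k₀` of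
the admissible polynomial growth orders satisfies `k₀ < 2 + 4a/(1-4a)`. -/
theorem stmt_11 {X : Type*} [MetricSpace X] [MeasurableSpace X] [BorelSpace X]
    (μ : Measure X) (x₀ : X) (a c A : ℝ)
    (ha : a ∈ Set.Ioo (0 : ℝ) (1 / 4)) (hc : 0 < c) (hA : 0 ≤ A)
    (hpoly : ∃ k > (0:ℝ), ∃ C > (0:ℝ),
      ∀ t > (0:ℝ), μ (Metric.ball x₀ t) ≤ ENNReal.ofReal (C * (1 + t) ^ k))
    (hstab : ∀ Q > (0:ℝ), ∀ ε > (0:ℝ), ∀ α > (0:ℝ),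
      c * ∫ x in Metric.ball x₀ Q,
            ((1 + ε * dist x₀ x) ^ (-α) - (1 + ε * Q) ^ (-α)) ^ 2 ∂μ
        ≤ A * ((1 + ε * 0) ^ (-α) - (1 + ε * Q) ^ (-α)) ^ 2
          + ε ^ 2 * α * ((1 - 4 * a) * α - 2 * a) *
              ∫ x in Metric.ball x₀ Q, (1 + ε * dist x₀ x) ^ (-2 * α - 2) ∂μ
          + 2 * a * ε ^ 2 * α * (α + 1) * (1 + ε * Q) ^ (-α) *
              ∫ x in Metric.ball x₀ Q, (1 + ε * dist x₀ x) ^ (-α - 2) ∂μ) :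
    sInf {k : ℝ | 0 < k ∧ ∃ C > (0:ℝ),
        ∀ t > (0:ℝ), μ (Metric.ball x₀ t) ≤ ENNReal.ofReal (C * (1 + t) ^ k)}
      < 2 + 4 * a / (1 - 4 * a) := by
  obtain ⟨ha₀, ha₁⟩ := ha
  obtain ⟨k, hk, hgrowth⟩ : ∃ k > 0, HasPolyGrowth μ x₀ k := hpoly
  have hkey (R : ℝ) (hR : 0 < R) :
      c * μ.real (ball x₀ R) ≤ 9 * A + 18 * μ.real (ball x₀ (2 * R)) / R ^ 2 :=
    StabilityInequality.measureReal_ball_le hstab ha₀.le (by linarith) hc.le hR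
      (hgrowth.measure_ball_ne_top (by positivity))
  have h2 : HasPolyGrowth μ x₀ 2 :=
    hgrowth.two_of_measureReal_ball_le hc (by positivity) (by norm_num) hkey hk.le
  have h2mem : (2:ℝ) ∈ {k : ℝ | 0 < k ∧ HasPolyGrowth μ x₀ k} := ⟨two_pos, h2⟩
  refine (csInf_le ⟨0, fun _ hk => hk.1.le⟩ h2mem).trans_lt ?_
  exact lt_add_of_pos_right _ (div_pos (by linarith) (by linarith))
end
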